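/- arXiv:1107.2636 — 2 statements merged into one kernel-verified Lean document; each statement's English description precedes it below -/
import Mathlib

section
/- For every p ∈ [0, 3/4), the probability that some point of [0,1]^2 is not covered by any available dyadic tile of order n tends to 1 as n → ∞; consequently lim_{n→∞} T_n(p) = 0, and hence p_c ≥ 3/4. -/
open Set Filter Topology

noncomputable section

/-- The dyadic tile `[a/2^i, (a+1)/2^i] × [b/2^j, (b+1)/2^j]` as a subset of `ℝ × ℝ`. -/
def dyadicTile (i j a b : ℕ) : Set (ℝ × ℝ) :=
  Set.Icc ((a : ℝ) / 2 ^ i) (((a : ℝ) + 1) / 2 ^ i) ×ˢ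
    Set.Icc ((b : ℝ) / 2 ^ j) (((b : ℝ) + 1) / 2 ^ j)

/-- `t` is a dyadic tile of order `n` contained in the unit square. -/
def IsDyadicTile (n : ℕ) (t : Set (ℝ × ℝ)) : Prop :=
  ∃ i j a b : ℕ, i + j = n ∧ a < 2 ^ i ∧ b < 2 ^ j ∧ t = dyadicTile i j a b

/-- `F` is a tiling of the region `R` by dyadic tiles of order `n`:
a set of order-`n` tiles whose union is `R` and whose interiors are pairwise disjoint. -/
def IsTiling (n : ℕ) (F : Set (Set (ℝ × ℝ))) (R : Set (ℝ × ℝ)) : Prop :=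
  (∀ t ∈ F, IsDyadicTile n t) ∧ ⋃₀ F = R ∧
    F.Pairwise fun s t => interior s ∩ interior t = ∅

def unitSquare : Set (ℝ × ℝ) := Set.Icc (0 : ℝ) 1 ×ˢ Set.Icc (0 : ℝ) 1

/-- Index type for the dyadic tiles of order `n`: a shape `i` (width `2^{-i}`, height
`2^{-(n-i)}`) together with the horizontal and vertical positions. -/
abbrev TileIndex (n : ℕ) : Type :=
  Σ i : Fin (n + 1), Fin (2 ^ (i : ℕ)) × Fin (2 ^ (n - (i : ℕ)))

/-- The order-`n` tile corresponding to an index. -/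
def tileOf (n : ℕ) (x : TileIndex n) : Set (ℝ × ℝ) :=
  dyadicTile (x.1 : ℕ) (n - (x.1 : ℕ)) (x.2.1 : ℕ) (x.2.2 : ℕ)

/-- The set `S` of available order-`n` tiles admits a tiling of the unit square. -/
def TileableSquare (n : ℕ) (S : Finset (TileIndex n)) : Prop :=
  ∃ F : Set (Set (ℝ × ℝ)), (∀ t ∈ F, ∃ x ∈ S, t = tileOf n x) ∧ IsTiling n F unitSquare

open Classical in
/-- Probability of the event `E` when each of the `(n+1)·2^n` order-`n` dyadic tiles is
available independently with probability `p`. -/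
def Pr (n : ℕ) (p : ℝ) (E : Finset (TileIndex n) → Prop) : ℝ :=
  ∑ S : Finset (TileIndex n),
    if E S then p ^ S.card * (1 - p) ^ ((n + 1) * 2 ^ n - S.card) else 0

/-- `T n p`: the probability that some set of available order-`n` tiles tiles `[0,1]²`. -/
def T (n : ℕ) (p : ℝ) : ℝ := Pr n p (TileableSquare n)

/-- The critical probability `p_c`. -/
def pc : ℝ :=
  sInf {p : ℝ | p ∈ Set.Icc (0 : ℝ) 1 ∧ Tendsto (fun n => T n p) atTop (𝓝 1)}


/-- The event that some point of the unit square is covered by no available tile. -/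
def UncoveredExists (n : ℕ) (S : Finset (TileIndex n)) : Prop :=
  ∃ x ∈ unitSquare, ∀ i ∈ S, x ∉ tileOf n i

/-! The second moment method. Cut `[0,1]²` into the `4^n` cells of side `2^{-n}`: the centre
of a cell lies in exactly one order-`n` tile of each of the `n + 1` shapes, and is uncovered when
all of them are unavailable, which happens with probability `q^{n+1}`, `q = 1 - p`. So the number
`X` of such cells has `E X = 4^n q^{n+1}`.

Two cells share their tile of shape `i` iff their first coordinates agree at dyadic level `n - i`
and their second ones at level `i`. If they share `m` shapes, the smallest `i` and the largest
`j ≥ i + m - 1` of them already leave at most `2^{3n+1-m}` choices for the pair, so at most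
`(n + 1) 2^{3n+1-m}` pairs of cells share `m` tiles. Summing `q^{-m}` over these pairs gives
`E X² ≤ (E X)² (1 + ε_n)` with `ε_n = O(n² (M/2)^n)`, `M = max 1 (2q)⁻¹`, and `M < 2` is
exactly `p < 3/4`. By Cauchy–Schwarz `P(X ≠ 0) ≥ (E X)² / E X² → 1`. A tiling covers every
point, so `T_n(p) ≤ 1 - P(X ≠ 0) → 0`, while `T_n(1) = 1` (the horizontal slabs tile the
square); hence `p_c ≥ 3/4`. -/

open Finset

section Bernoulli

variable {ι : Type*} [Fintype ι]

def bernoulliWeight (p : ℝ) (S : Finset ι) : ℝ := p ^ #S * (1 - p) ^ (Fintype.card ι - #S)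

lemma bernoulliWeight_nonneg {p : ℝ} (hp0 : 0 ≤ p) (hp1 : p ≤ 1) (S : Finset ι) :
    0 ≤ bernoulliWeight p S := by
  have : 0 ≤ 1 - p := by linarith
  unfold bernoulliWeight; positivity

variable [DecidableEq ι]

lemma sum_bernoulliWeight_filter_disjoint (p : ℝ) (A : Finset ι) :
    ∑ S with Disjoint A S, bernoulliWeight p S = (1 - p) ^ #A := by
  have hfilter : ({S | Disjoint A S} : Finset (Finset ι)) = Aᶜ.powerset := by
    ext S; simp [Finset.subset_compl_iff_disjoint_left]
  have hweight : ∀ S ∈ Aᶜ.powerset,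
      bernoulliWeight p S = (1 - p) ^ #A * (p ^ #S * (1 - p) ^ (#Aᶜ - #S)) := by
    intro S hS
    have hS : #S ≤ #Aᶜ := card_le_card (mem_powerset.1 hS)
    have hA : #Aᶜ + #A = Fintype.card ι := by
      rw [card_compl, Nat.sub_add_cancel (card_le_univ A)]
    rw [bernoulliWeight, show Fintype.card ι - #S = #A + (#Aᶜ - #S) by omega, pow_add]
    ring
  rw [hfilter, sum_congr rfl hweight, ← mul_sum, sum_pow_mul_eq_add_pow, add_sub_cancel, one_pow,
    mul_one]

lemma sum_bernoulliWeight (p : ℝ) : ∑ S : Finset ι, bernoulliWeight p S = 1 := by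
  simpa using sum_bernoulliWeight_filter_disjoint p (∅ : Finset ι)

lemma sum_bernoulliWeight_mul_card_filter_disjoint {κ : Type*} [Fintype κ] (p : ℝ)
    (A : κ → Finset ι) :
    ∑ S, bernoulliWeight p S * #{k | Disjoint (A k) S} = ∑ k, (1 - p) ^ #(A k) := by
  simp_rw [card_filter, Nat.cast_sum, mul_sum, ← sum_bernoulliWeight_filter_disjoint, sum_filter]
  rw [sum_comm]
  refine sum_congr rfl fun k _ => sum_congr rfl fun S _ => ?_
  split_ifs <;> simp

lemma sum_bernoulliWeight_mul_sq_card_filter_disjoint {κ : Type*} [Fintype κ] [DecidableEq κ]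
    (p : ℝ) (A : κ → Finset ι) :
    ∑ S, bernoulliWeight p S * (#{k | Disjoint (A k) S} : ℝ) ^ 2 =
      ∑ kl : κ × κ, (1 - p) ^ #(A kl.1 ∪ A kl.2) := by
  rw [← sum_bernoulliWeight_mul_card_filter_disjoint]
  refine sum_congr rfl fun S _ => ?_
  rw [sq, ← Nat.cast_mul, ← card_product, ← filter_product, ← univ_product_univ]
  simp only [Finset.disjoint_union_left]

end Bernoulli

lemma sq_sum_mul_le_sum_filter_ne_zero_mul_sum_mul_sq {Ω : Type*} [Fintype Ω] (w X : Ω → ℝ)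
    (hw : ∀ ω, 0 ≤ w ω) :
    (∑ ω, w ω * X ω) ^ 2 ≤ (∑ ω with X ω ≠ 0, w ω) * ∑ ω, w ω * X ω ^ 2 := by
  classical
  rw [sum_filter]
  refine sum_sq_le_sum_mul_sum_of_sq_le_mul _ (fun ω _ => ?_) (fun ω _ => ?_) (fun ω _ => ?_)
  · split_ifs <;> simp [hw]
  · exact mul_nonneg (hw ω) (sq_nonneg _)
  · by_cases h : X ω = 0
    · simp [h]
    · rw [if_pos h]; exact le_of_eq (by ring)

lemma card_tileIndex (n : ℕ) : Fintype.card (TileIndex n) = (n + 1) * 2 ^ n := by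
  have hshape : ∀ i : Fin (n + 1),
      Fintype.card (Fin (2 ^ (i : ℕ)) × Fin (2 ^ (n - i))) = 2 ^ n := fun i => by
    rw [Fintype.card_prod, Fintype.card_fin, Fintype.card_fin, ← pow_add,
      Nat.add_sub_cancel' i.is_le]
  simp [Fintype.card_sigma, hshape]

section Probability

variable {n : ℕ} {p : ℝ}

lemma Pr_eq_sum_filter (E : Finset (TileIndex n) → Prop) [DecidablePred E] :
    Pr n p E = ∑ S with E S, bernoulliWeight p S := by
  rw [Pr, sum_filter]
  simp only [bernoulliWeight, card_tileIndex]
  -- the two sides differ only in their decidability instances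
  congr 1; ext S; congr

lemma Pr_nonneg (hp0 : 0 ≤ p) (hp1 : p ≤ 1) (E : Finset (TileIndex n) → Prop) :
    0 ≤ Pr n p E := by
  classical
  rw [Pr_eq_sum_filter]
  exact sum_nonneg fun S _ => bernoulliWeight_nonneg hp0 hp1 S

lemma Pr_mono (hp0 : 0 ≤ p) (hp1 : p ≤ 1) {E F : Finset (TileIndex n) → Prop}
    (h : ∀ S, E S → F S) : Pr n p E ≤ Pr n p F := by
  classical
  rw [Pr_eq_sum_filter, Pr_eq_sum_filter]
  exact sum_le_sum_of_subset_of_nonneg (monotone_filter_right _ fun S _ => h S)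
    fun S _ _ => bernoulliWeight_nonneg hp0 hp1 S

lemma Pr_add_Pr_not (E : Finset (TileIndex n) → Prop) :
    Pr n p E + Pr n p (fun S => ¬ E S) = 1 := by
  classical
  rw [Pr_eq_sum_filter, Pr_eq_sum_filter, sum_filter_add_sum_filter_not, sum_bernoulliWeight]

lemma Pr_le_one (hp0 : 0 ≤ p) (hp1 : p ≤ 1) (E : Finset (TileIndex n) → Prop) :
    Pr n p E ≤ 1 := by
  linarith [Pr_add_Pr_not (p := p) E, Pr_nonneg hp0 hp1 fun S => ¬ E S]

lemma Pr_one_of_univ {E : Finset (TileIndex n) → Prop} (hE : E univ) : Pr n 1 E = 1 := by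
  classical
  refine le_antisymm (Pr_le_one zero_le_one le_rfl E) ?_
  rw [Pr_eq_sum_filter]
  calc (1 : ℝ) = bernoulliWeight 1 (univ : Finset (TileIndex n)) := by simp [bernoulliWeight]
    _ ≤ _ := single_le_sum (fun S _ => bernoulliWeight_nonneg zero_le_one le_rfl S)
        (mem_filter.2 ⟨mem_univ _, hE⟩)

end Probability

lemma div_two_pow_eq_of_mem_Icc {u a i k n : ℕ} (hn : i + k = n)
    (h : (2 * (u : ℝ) + 1) / 2 ^ (n + 1) ∈ Set.Icc ((a : ℝ) / 2 ^ i) ((a + 1) / 2 ^ i)) :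
    u / 2 ^ k = a := by
  subst hn
  have hsplit : (2 : ℝ) ^ (i + k + 1) = (2 * 2 ^ k) * 2 ^ i := by ring
  rw [hsplit, ← div_div, Set.mem_Icc, div_le_div_iff_of_pos_right (by positivity),
    div_le_div_iff_of_pos_right (by positivity), le_div_iff₀ (by positivity),
    div_le_iff₀ (by positivity)] at h
  obtain ⟨hlo, hhi⟩ := h
  have hlo' : a * (2 * 2 ^ k) ≤ 2 * u + 1 := by exact_mod_cast hlo
  have hhi' : 2 * u + 1 ≤ (a + 1) * (2 * 2 ^ k) := by exact_mod_cast hhi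
  apply Nat.div_eq_of_lt_le <;> nlinarith

lemma odd_div_two_pow_succ_mem_Icc {u n : ℕ} (hu : u < 2 ^ n) :
    (2 * (u : ℝ) + 1) / 2 ^ (n + 1) ∈ Set.Icc (0 : ℝ) 1 := by
  have hu' : (u : ℝ) + 1 ≤ 2 ^ n := by exact_mod_cast hu
  refine ⟨by positivity, (div_le_one (by positivity)).2 ?_⟩
  rw [pow_succ]
  linarith

section Cells

variable {n : ℕ}

/-- The cell `(u, v)` is the square `[u, u + 1] × [v, v + 1]` scaled by `2^{-n}`; `cellTile c i`
is the tile of shape `i` containing it. -/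
abbrev Cell (n : ℕ) : Type := Fin (2 ^ n) × Fin (2 ^ n)

def cellCenter (c : Cell n) : ℝ × ℝ :=
  ((2 * (c.1 : ℝ) + 1) / 2 ^ (n + 1), (2 * (c.2 : ℝ) + 1) / 2 ^ (n + 1))

def cellTile (c : Cell n) (i : Fin (n + 1)) : TileIndex n :=
  ⟨i, ⟨c.1 / 2 ^ (n - i), Nat.div_lt_of_lt_mul <| by
      rw [← pow_add, Nat.sub_add_cancel i.is_le]; exact c.1.2⟩,
    ⟨c.2 / 2 ^ (i : ℕ), Nat.div_lt_of_lt_mul <| by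
      rw [← pow_add, Nat.add_sub_cancel' i.is_le]; exact c.2.2⟩⟩

def cellTiles (c : Cell n) : Finset (TileIndex n) := univ.image (cellTile c)

lemma cellTile_injective (c : Cell n) : Function.Injective (cellTile c) :=
  fun _ _ h => congrArg Sigma.fst h

lemma card_cellTiles (c : Cell n) : #(cellTiles c) = n + 1 := by
  rw [cellTiles, card_image_of_injective _ (cellTile_injective c), card_univ, Fintype.card_fin]

lemma cellCenter_mem_unitSquare (c : Cell n) : cellCenter c ∈ unitSquare :=
  ⟨odd_div_two_pow_succ_mem_Icc c.1.2, odd_div_two_pow_succ_mem_Icc c.2.2⟩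

lemma mem_cellTiles_of_cellCenter_mem {c : Cell n} {x : TileIndex n}
    (h : cellCenter c ∈ tileOf n x) : x ∈ cellTiles c := by
  obtain ⟨i, a, b⟩ := x
  obtain ⟨ha, hb⟩ := h
  have ha' := div_two_pow_eq_of_mem_Icc (Nat.add_sub_cancel' i.is_le) ha
  have hb' := div_two_pow_eq_of_mem_Icc (Nat.sub_add_cancel i.is_le) hb
  exact mem_image.2 ⟨i, mem_univ _, by simp only [cellTile, ha', hb']⟩

lemma uncoveredExists_of_disjoint_cellTiles {c : Cell n} {S : Finset (TileIndex n)}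
    (h : Disjoint (cellTiles c) S) : UncoveredExists n S :=
  ⟨cellCenter c, cellCenter_mem_unitSquare c, fun _ hx hmem =>
    disjoint_left.1 h (mem_cellTiles_of_cellCenter_mem hmem) hx⟩

end Cells

lemma Nat.div_two_pow_eq_of_le {a c k K : ℕ} (h : a / 2 ^ k = c / 2 ^ k) (hkK : k ≤ K) :
    a / 2 ^ K = c / 2 ^ K := by
  obtain ⟨d, hd⟩ := pow_dvd_pow 2 hkK
  rw [hd, ← Nat.div_div_eq_div_mul, ← Nat.div_div_eq_div_mul, h]

lemma card_filter_div_eq_le (N d : ℕ) (hd : 0 < d) :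
    #{uu : Fin N × Fin N | (uu.1 : ℕ) / d = uu.2 / d} ≤ N * d := by
  let f : Fin N × Fin N → Fin N × Fin d := fun uu => (uu.1, ⟨uu.2 % d, Nat.mod_lt _ hd⟩)
  have hinj : Set.InjOn f {uu | (uu.1 : ℕ) / d = uu.2 / d} := by
    rintro ⟨u, u'⟩ hu ⟨w, w'⟩ hw hf
    simp only [f, Prod.mk.injEq, Fin.mk.injEq] at hf
    obtain ⟨rfl, hmod⟩ := hf
    have hdiv : (u' : ℕ) / d = w' / d := hu.symm.trans hw
    refine Prod.ext rfl (Fin.ext ?_)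
    rw [← Nat.div_add_mod u' d, ← Nat.div_add_mod w' d, hdiv, hmod]
  calc _ ≤ #(univ : Finset (Fin N × Fin d)) :=
        card_le_card_of_injOn f (fun _ _ => mem_coe.2 (mem_univ _)) (by simpa using hinj)
    _ = N * d := by simp

section PairCount

variable {n : ℕ}

def sharedShapes (c d : Cell n) : Finset (Fin (n + 1)) := {i | cellTile c i = cellTile d i}

lemma cellTile_eq_cellTile_iff {c d : Cell n} {i : Fin (n + 1)} :
    cellTile c i = cellTile d i ↔
      (c.1 : ℕ) / 2 ^ (n - i) = d.1 / 2 ^ (n - i) ∧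
        (c.2 : ℕ) / 2 ^ (i : ℕ) = d.2 / 2 ^ (i : ℕ) := by
  rw [cellTile, cellTile, Sigma.mk.inj_iff]
  simp only [heq_eq_eq, true_and, Prod.mk.injEq, Fin.ext_iff]

lemma card_cellTiles_inter_le (c d : Cell n) :
    #(cellTiles c ∩ cellTiles d) ≤ #(sharedShapes c d) := by
  refine (card_le_card fun x hx => ?_).trans (card_image_le (f := cellTile c))
  obtain ⟨hxc, hxd⟩ := mem_inter.1 hx
  obtain ⟨i, -, rfl⟩ := mem_image.1 hxc
  obtain ⟨j, -, hj⟩ := mem_image.1 hxd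
  obtain rfl : j = i := congrArg Sigma.fst hj
  exact mem_image.2 ⟨j, mem_filter.2 ⟨mem_univ _, hj.symm⟩, rfl⟩

/-- Agreement at a dyadic level persists at all coarser levels, so the smallest shared shape `i`
and the largest one `j ≥ i + m - 1` give agreement at levels `i` and `n - j ≤ n + 1 - m - i`. -/
lemma exists_window_of_le_card_sharedShapes {c d : Cell n} {m : ℕ} (hm : 1 ≤ m)
    (h : m ≤ #(sharedShapes c d)) :
    ∃ i < n + 2 - m, (c.1 : ℕ) / 2 ^ (n + 1 - m - i) = d.1 / 2 ^ (n + 1 - m - i) ∧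
      (c.2 : ℕ) / 2 ^ i = d.2 / 2 ^ i := by
  have hne : (sharedShapes c d).Nonempty := card_pos.1 (by omega)
  set i := (sharedShapes c d).min' hne
  set j := (sharedShapes c d).max' hne
  have hspan : m ≤ j + 1 - i := by
    refine h.trans ((card_le_card fun x hx => ?_).trans (Fin.card_Icc i j).le)
    exact Finset.mem_Icc.2 ⟨min'_le _ _ hx, le_max' _ _ hx⟩
  obtain ⟨-, hi⟩ := cellTile_eq_cellTile_iff.1 (mem_filter.1 (min'_mem _ hne)).2
  obtain ⟨hj, -⟩ := cellTile_eq_cellTile_iff.1 (mem_filter.1 (max'_mem _ hne)).2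
  have hjn : (j : ℕ) ≤ n := j.is_le
  exact ⟨i, by omega, Nat.div_two_pow_eq_of_le hj (by omega), hi⟩

lemma card_pairs_agree_le (k l : ℕ) :
    #{cd : Cell n × Cell n | (cd.1.1 : ℕ) / 2 ^ k = cd.2.1 / 2 ^ k ∧
      (cd.1.2 : ℕ) / 2 ^ l = cd.2.2 / 2 ^ l} ≤ 2 ^ (n + k) * 2 ^ (n + l) := by
  let e := Equiv.prodProdProdComm (Fin (2 ^ n)) (Fin (2 ^ n)) (Fin (2 ^ n)) (Fin (2 ^ n))
  let agree (k : ℕ) : Finset (Fin (2 ^ n) × Fin (2 ^ n)) :=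
    {uu | (uu.1 : ℕ) / 2 ^ k = uu.2 / 2 ^ k}
  calc _ ≤ #(agree k ×ˢ agree l) :=
        card_le_card_of_injOn e (fun cd hcd => by simpa [e, agree] using hcd) e.injective.injOn
    _ ≤ 2 ^ (n + k) * 2 ^ (n + l) := by
        rw [card_product, pow_add, pow_add 2 n l]
        exact Nat.mul_le_mul (card_filter_div_eq_le _ _ (by positivity))
          (card_filter_div_eq_le _ _ (by positivity))

lemma card_pairs_sharing_tiles_mul_two_pow_le {m : ℕ} (hm : 1 ≤ m) :
    #{cd : Cell n × Cell n | m ≤ #(cellTiles cd.1 ∩ cellTiles cd.2)} * 2 ^ m ≤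
      (n + 1) * 2 ^ (3 * n + 1) := by
  let window : ℕ → Finset (Cell n × Cell n) := fun i =>
    {cd | (cd.1.1 : ℕ) / 2 ^ (n + 1 - m - i) = cd.2.1 / 2 ^ (n + 1 - m - i) ∧
      (cd.1.2 : ℕ) / 2 ^ i = cd.2.2 / 2 ^ i}
  have hcover : ({cd | m ≤ #(cellTiles cd.1 ∩ cellTiles cd.2)} : Finset (Cell n × Cell n)) ⊆
      (range (n + 2 - m)).biUnion window := by
    intro cd hcd
    obtain ⟨i, hi, hagree⟩ := exists_window_of_le_card_sharedShapes hm
      ((mem_filter.1 hcd).2.trans (card_cellTiles_inter_le _ _))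
    exact mem_biUnion.2 ⟨i, mem_range.2 hi, mem_filter.2 ⟨mem_univ _, hagree⟩⟩
  have hwindow : ∀ i ∈ range (n + 2 - m), #(window i) * 2 ^ m ≤ 2 ^ (3 * n + 1) := by
    intro i hi
    have hi' := mem_range.1 hi
    calc _ ≤ 2 ^ (n + (n + 1 - m - i)) * 2 ^ (n + i) * 2 ^ m :=
          Nat.mul_le_mul_right _ (card_pairs_agree_le _ _)
      _ = 2 ^ (3 * n + 1) := by rw [← pow_add, ← pow_add]; congr 1; omega
  calc _ ≤ (∑ i ∈ range (n + 2 - m), #(window i)) * 2 ^ m :=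
        Nat.mul_le_mul_right _ ((Finset.card_le_card hcover).trans card_biUnion_le)
    _ ≤ ∑ i ∈ range (n + 2 - m), 2 ^ (3 * n + 1) := by rw [sum_mul]; exact sum_le_sum hwindow
    _ ≤ (n + 1) * 2 ^ (3 * n + 1) := by
        rw [sum_const, card_range, smul_eq_mul]; exact Nat.mul_le_mul_right _ (by omega)

end PairCount

lemma pow_le_one_add_sum_Icc {x : ℝ} (hx : 0 ≤ x) (a : ℕ) :
    x ^ a ≤ 1 + ∑ m ∈ Finset.Icc 1 a, x ^ m := by
  rcases Nat.eq_zero_or_pos a with rfl | ha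
  · simp
  · have := single_le_sum (fun m _ => pow_nonneg hx m) (Finset.mem_Icc.2 ⟨ha, le_rfl⟩)
    linarith

lemma sum_pow_le_card_add_sum_card_filter_le_mul {α : Type*} [Fintype α] {x : ℝ} (hx : 0 ≤ x)
    (a : α → ℕ) {N : ℕ} (ha : ∀ i, a i ≤ N) :
    ∑ i, x ^ a i ≤
      Fintype.card α + ∑ m ∈ Finset.Icc 1 N, (#{i | m ≤ a i} : ℝ) * x ^ m := by
  have hswap : ∑ i, ∑ m ∈ Finset.Icc 1 (a i), x ^ m =
      ∑ m ∈ Finset.Icc 1 N, ∑ i with m ≤ a i, x ^ m := by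
    refine sum_comm' fun i m => ?_
    simp only [Finset.mem_Icc, mem_filter, Finset.mem_univ, true_and]
    have := ha i
    omega
  calc ∑ i, x ^ a i ≤ ∑ i, (1 + ∑ m ∈ Finset.Icc 1 (a i), x ^ m) :=
        sum_le_sum fun i _ => pow_le_one_add_sum_Icc hx (a i)
    _ = _ := by simp only [sum_add_distrib, hswap, sum_const, nsmul_eq_mul, card_univ, mul_one]

def errorBound (n : ℕ) (M : ℝ) : ℝ := 2 * M * ((n + 1) ^ 2 * (M / 2) ^ n)

lemma sum_pow_card_cellTiles_union_le {n : ℕ} {q : ℝ} (hq : 0 < q) :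
    ∑ cd : Cell n × Cell n, q ^ #(cellTiles cd.1 ∪ cellTiles cd.2) ≤
      ((2 ^ n * 2 ^ n : ℝ) * q ^ (n + 1)) ^ 2 * (1 + errorBound n (max 1 (2 * q)⁻¹)) := by
  set M := max 1 (2 * q)⁻¹
  set a : Cell n × Cell n → ℕ := fun cd => #(cellTiles cd.1 ∩ cellTiles cd.2)
  have ha : ∀ cd, a cd ≤ n + 1 := fun cd =>
    (Finset.card_le_card inter_subset_left).trans (card_cellTiles _).le
  have hunion : ∀ cd : Cell n × Cell n,
      q ^ #(cellTiles cd.1 ∪ cellTiles cd.2) = q ^ (2 * n + 2) * q⁻¹ ^ a cd := by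
    intro cd
    have h : #(cellTiles cd.1 ∪ cellTiles cd.2) + a cd = (n + 1) + (n + 1) :=
      (card_union_add_card_inter _ _).trans (by rw [card_cellTiles, card_cellTiles])
    have := ha cd
    have hcard : #(cellTiles cd.1 ∪ cellTiles cd.2) = 2 * n + 2 - a cd := by omega
    rw [hcard, pow_sub₀ _ hq.ne' (by omega), inv_pow]
  have hlayer : ∀ m ∈ Finset.Icc 1 (n + 1),
      (#{cd | m ≤ a cd} : ℝ) * q⁻¹ ^ m ≤ (n + 1) * 2 ^ (3 * n + 1) * M ^ (n + 1) := by
    intro m hm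
    obtain ⟨hm1, hmn⟩ := Finset.mem_Icc.1 hm
    have hcount : (#{cd | m ≤ a cd} : ℝ) * 2 ^ m ≤ (n + 1) * 2 ^ (3 * n + 1) := by
      exact_mod_cast card_pairs_sharing_tiles_mul_two_pow_le hm1
    have hM : (2 * q)⁻¹ ^ m ≤ M ^ (n + 1) :=
      (pow_le_pow_left₀ (by positivity) (le_max_right _ _) m).trans
        (pow_le_pow_right₀ (le_max_left _ _) hmn)
    calc (#{cd | m ≤ a cd} : ℝ) * q⁻¹ ^ m
        = (#{cd | m ≤ a cd} * 2 ^ m) * (2 * q)⁻¹ ^ m := by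
          rw [mul_inv, mul_pow, inv_pow 2, ← mul_assoc, mul_assoc _ (2 ^ m : ℝ),
            mul_inv_cancel₀ (by positivity), mul_one]
      _ ≤ (n + 1) * 2 ^ (3 * n + 1) * M ^ (n + 1) :=
          mul_le_mul hcount hM (by positivity) (by positivity)
  calc ∑ cd : Cell n × Cell n, q ^ #(cellTiles cd.1 ∪ cellTiles cd.2)
      = q ^ (2 * n + 2) * ∑ cd, q⁻¹ ^ a cd := by
        rw [mul_sum]; exact sum_congr rfl fun cd _ => hunion cd
    _ ≤ q ^ (2 * n + 2) * (Fintype.card (Cell n × Cell n) +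
          ∑ m ∈ Finset.Icc 1 (n + 1), (#{cd | m ≤ a cd} : ℝ) * q⁻¹ ^ m) :=
        mul_le_mul_of_nonneg_left
          (sum_pow_le_card_add_sum_card_filter_le_mul (by positivity) a ha) (by positivity)
    _ ≤ q ^ (2 * n + 2) * (Fintype.card (Cell n × Cell n) +
          ∑ m ∈ Finset.Icc 1 (n + 1), (n + 1) * 2 ^ (3 * n + 1) * M ^ (n + 1)) :=
        mul_le_mul_of_nonneg_left (add_le_add_right (sum_le_sum hlayer) _) (by positivity)
    _ = _ := by
        simp only [sum_const, Nat.card_Icc, nsmul_eq_mul, Fintype.card_prod, Fintype.card_fin,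
          errorBound, div_pow]
        push_cast
        field_simp
        ring

lemma errorBound_nonneg (n : ℕ) {M : ℝ} (hM : 0 ≤ M) : 0 ≤ errorBound n M := by
  unfold errorBound; positivity

lemma tendsto_errorBound {M : ℝ} (hM0 : 0 ≤ M) (hM2 : M < 2) :
    Tendsto (fun n => errorBound n M) atTop (𝓝 0) := by
  have hgeom (k : ℕ) : Tendsto (fun n : ℕ => (n : ℝ) ^ k * (M / 2) ^ n) atTop (𝓝 0) :=
    tendsto_pow_const_mul_const_pow_of_abs_lt_one k (by rw [abs_lt]; constructor <;> linarith)
  have h := ((((hgeom 2).add ((hgeom 1).const_mul 2)).add (hgeom 0)).const_mul (2 * M))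
  simp only [mul_zero, add_zero] at h
  refine h.congr fun n => ?_
  simp only [errorBound]
  ring

section Uncovered

variable {n : ℕ} {p : ℝ}

lemma one_le_Pr_uncoveredExists_mul (hp0 : 0 ≤ p) (hp1 : p < 1) :
    1 ≤ Pr n p (UncoveredExists n) * (1 + errorBound n (max 1 (2 * (1 - p))⁻¹)) := by
  classical
  set ε := errorBound n (max 1 (2 * (1 - p))⁻¹)
  set X : Finset (TileIndex n) → ℝ := fun S => #{c : Cell n | Disjoint (cellTiles c) S}
  set μ : ℝ := (2 ^ n * 2 ^ n : ℝ) * (1 - p) ^ (n + 1)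
  have hq : 0 < 1 - p := by linarith
  have hw : ∀ S : Finset (TileIndex n), 0 ≤ bernoulliWeight p S :=
    bernoulliWeight_nonneg hp0 hp1.le
  have hfirst : ∑ S, bernoulliWeight p S * X S = μ := by
    simp [X, μ, sum_bernoulliWeight_mul_card_filter_disjoint, card_cellTiles]
  have hsecond : ∑ S, bernoulliWeight p S * X S ^ 2 ≤ μ ^ 2 * (1 + ε) := by
    rw [sum_bernoulliWeight_mul_sq_card_filter_disjoint]
    exact sum_pow_card_cellTiles_union_le hq
  have hevent : ∑ S with X S ≠ 0, bernoulliWeight p S ≤ Pr n p (UncoveredExists n) := by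
    rw [Pr_eq_sum_filter]
    refine sum_le_sum_of_subset_of_nonneg (monotone_filter_right _ fun S _ hX => ?_)
      fun S _ _ => hw S
    obtain ⟨c, hc⟩ := card_ne_zero.1 (Nat.cast_ne_zero.1 hX)
    exact uncoveredExists_of_disjoint_cellTiles (mem_filter.1 hc).2
  have hCauchySchwarz := sq_sum_mul_le_sum_filter_ne_zero_mul_sum_mul_sq _ X hw
  rw [hfirst] at hCauchySchwarz
  have hμ : 0 < μ ^ 2 := by positivity
  refine le_of_mul_le_mul_left ?_ hμ
  calc μ ^ 2 * 1 = μ ^ 2 := mul_one _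
    _ ≤ _ := hCauchySchwarz
    _ ≤ Pr n p (UncoveredExists n) * (μ ^ 2 * (1 + ε)) :=
        mul_le_mul hevent hsecond (sum_nonneg fun S _ => mul_nonneg (hw S) (sq_nonneg _))
          (Pr_nonneg hp0 hp1.le _)
    _ = μ ^ 2 * (Pr n p (UncoveredExists n) * (1 + ε)) := by ring

end Uncovered

lemma tendsto_Pr_uncoveredExists {p : ℝ} (hp0 : 0 ≤ p) (hp : p < 3 / 4) :
    Tendsto (fun n => Pr n p (UncoveredExists n)) atTop (𝓝 1) := by
  set M := max 1 (2 * (1 - p))⁻¹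
  have hM0 : 0 ≤ M := zero_le_one.trans (le_max_left _ _)
  have hM2 : M < 2 := max_lt (by norm_num) (by rw [inv_lt_comm₀ (by linarith) two_pos]; linarith)
  have hlower : Tendsto (fun n => (1 + errorBound n M)⁻¹) atTop (𝓝 1) := by
    simpa using ((tendsto_errorBound hM0 hM2).const_add 1).inv₀ (by norm_num)
  refine tendsto_of_tendsto_of_tendsto_of_le_of_le hlower tendsto_const_nhds (fun n => ?_)
    fun n => Pr_le_one hp0 (by linarith) _
  have hpos : 0 < 1 + errorBound n M := by linarith [errorBound_nonneg n hM0]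
  exact (inv_le_iff_one_le_mul₀ hpos).2 (one_le_Pr_uncoveredExists_mul hp0 (by linarith))

lemma not_uncoveredExists_of_tileableSquare {n : ℕ} {S : Finset (TileIndex n)}
    (h : TileableSquare n S) : ¬ UncoveredExists n S := by
  rintro ⟨x, hx, hunc⟩
  obtain ⟨F, hF, -, hunion, -⟩ := h
  obtain ⟨t, htF, hxt⟩ := Set.mem_sUnion.1 (hunion ▸ hx)
  obtain ⟨i, hiS, rfl⟩ := hF t htF
  exact hunc i hiS hxt

lemma tendsto_T_zero {p : ℝ} (hp0 : 0 ≤ p) (hp : p < 3 / 4) :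
    Tendsto (fun n => T n p) atTop (𝓝 0) := by
  have hp1 : p ≤ 1 := by linarith
  have hupper : Tendsto (fun n => 1 - Pr n p (UncoveredExists n)) atTop (𝓝 0) := by
    simpa using (tendsto_Pr_uncoveredExists hp0 hp).const_sub 1
  refine tendsto_of_tendsto_of_tendsto_of_le_of_le tendsto_const_nhds hupper
    (fun n => Pr_nonneg hp0 hp1 _) fun n => ?_
  have hmono : T n p ≤ Pr n p fun S => ¬ UncoveredExists n S :=
    Pr_mono hp0 hp1 fun _ => not_uncoveredExists_of_tileableSquare
  linarith [Pr_add_Pr_not (n := n) (p := p) (UncoveredExists n)]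

lemma exists_lt_two_pow_mem_Icc (n : ℕ) {y : ℝ} (hy : y ∈ Set.Icc (0 : ℝ) 1) :
    ∃ b : ℕ, b < 2 ^ n ∧ y ∈ Set.Icc ((b : ℝ) / 2 ^ n) ((b + 1) / 2 ^ n) := by
  have h2n : (0 : ℝ) < 2 ^ n := by positivity
  have hy0 : 0 ≤ y * 2 ^ n := mul_nonneg hy.1 h2n.le
  rcases hy.2.lt_or_eq with hlt | rfl
  · refine ⟨⌊y * 2 ^ n⌋₊, ?_, ?_, ?_⟩
    · exact (Nat.floor_lt hy0).2 (by push_cast; nlinarith)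
    · rw [div_le_iff₀ h2n]; exact Nat.floor_le hy0
    · rw [le_div_iff₀ h2n]; exact (Nat.lt_floor_add_one _).le
  · refine ⟨2 ^ n - 1, Nat.sub_lt (Nat.two_pow_pos n) one_pos, ?_, ?_⟩ <;>
      rw [Nat.cast_sub Nat.one_le_two_pow] <;> push_cast
    · rw [div_le_one h2n]; linarith
    · rw [sub_add_cancel, div_self h2n.ne']

lemma Icc_div_two_pow_subset_Icc {n b : ℕ} (hb : b < 2 ^ n) :
    Set.Icc ((b : ℝ) / 2 ^ n) ((b + 1) / 2 ^ n) ⊆ Set.Icc 0 1 := by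
  have hb' : (b : ℝ) + 1 ≤ 2 ^ n := by exact_mod_cast hb
  exact Set.Icc_subset_Icc (by positivity) ((div_le_one (by positivity)).2 hb')

lemma disjoint_Ioo_div_two_pow {n b b' : ℕ} (h : b < b') :
    Disjoint (Set.Ioo ((b : ℝ) / 2 ^ n) ((b + 1) / 2 ^ n))
      (Set.Ioo ((b' : ℝ) / 2 ^ n) ((b' + 1) / 2 ^ n)) := by
  have hle : ((b : ℝ) + 1) / 2 ^ n ≤ b' / 2 ^ n := by gcongr; exact_mod_cast h
  exact Set.disjoint_left.2 fun z hz hz' => by linarith [hz.2, hz'.1]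

section Slabs

variable {n : ℕ}

def slab (b : Fin (2 ^ n)) : TileIndex n := ⟨⟨0, n.succ_pos⟩, ⟨0, by simp⟩, b⟩

lemma tileOf_slab (b : Fin (2 ^ n)) :
    tileOf n (slab b) = Set.Icc (0 : ℝ) 1 ×ˢ Set.Icc ((b : ℝ) / 2 ^ n) ((b + 1) / 2 ^ n) := by
  simp [tileOf, slab, dyadicTile]

lemma isTiling_slabs :
    IsTiling n (Set.range fun b : Fin (2 ^ n) => tileOf n (slab b)) unitSquare := by
  refine ⟨?_, ?_, ?_⟩
  · rintro _ ⟨b, rfl⟩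
    exact ⟨0, n, 0, b, zero_add n, Nat.two_pow_pos 0, b.2, rfl⟩
  · ext ⟨x, y⟩
    simp only [Set.sUnion_range, Set.mem_iUnion, tileOf_slab, Set.mem_prod, unitSquare]
    constructor
    · rintro ⟨b, hx, hy⟩
      exact ⟨hx, Icc_div_two_pow_subset_Icc b.2 hy⟩
    · rintro ⟨hx, hy⟩
      obtain ⟨b, hb, hyb⟩ := exists_lt_two_pow_mem_Icc n hy
      exact ⟨⟨b, hb⟩, hx, hyb⟩
  · rintro _ ⟨b, rfl⟩ _ ⟨b', rfl⟩ hne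
    have hbb' : (b : ℕ) ≠ b' := fun h => hne (by rw [Fin.ext h])
    simp only [tileOf_slab, interior_prod_eq, interior_Icc, Set.prod_inter_prod,
      Set.prod_eq_empty_iff, ← Set.disjoint_iff_inter_eq_empty]
    right
    rcases hbb'.lt_or_gt with h | h
    · exact disjoint_Ioo_div_two_pow h
    · exact (disjoint_Ioo_div_two_pow h).symm

end Slabs

lemma tileableSquare_univ (n : ℕ) : TileableSquare n univ :=
  ⟨_, by rintro _ ⟨b, rfl⟩; exact ⟨slab b, Finset.mem_univ _, rfl⟩, isTiling_slabs⟩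

lemma T_one (n : ℕ) : T n 1 = 1 := Pr_one_of_univ (tileableSquare_univ n)

/-- for `0 ≤ p < 3/4`, the probability of an uncovered point tends to `1`,
consequently `T_n(p) → 0`; hence `p_c ≥ 3/4`. -/
theorem uncovered_points :
    (∀ p : ℝ, 0 ≤ p → p < 3 / 4 →
      Tendsto (fun n => Pr n p (UncoveredExists n)) atTop (𝓝 1) ∧
      Tendsto (fun n => T n p) atTop (𝓝 0)) ∧
    3 / 4 ≤ pc := by
  refine ⟨fun p hp0 hp => ⟨tendsto_Pr_uncoveredExists hp0 hp, tendsto_T_zero hp0 hp⟩, ?_⟩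
  have hone : Tendsto (fun n => T n 1) atTop (𝓝 1) := by simp [T_one]
  refine le_csInf ⟨1, ⟨zero_le_one, le_rfl⟩, hone⟩ fun p ⟨⟨hp0, _⟩, hT⟩ => ?_
  by_contra! hp
  exact one_ne_zero (tendsto_nhds_unique hT (tendsto_T_zero hp0 hp))

end
end

section
/- Fix a designation of each dyadic tile of order n as available or unavailable. Then a dyadic tile of order k < n is blocked if and only if at least one of its two horizontal children is blocked and at least one of its two vertical children is blocked. -/
open Set Filter Topology

noncomputable section

/-- Given the set `avail` of available order-`n` tiles, a tile (of order `≤ n`) is blocked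
if it cannot be tiled by available order-`n` tiles. -/
def Blocked (n : ℕ) (avail : Set (Set (ℝ × ℝ))) (t : Set (ℝ × ℝ)) : Prop :=
  ¬ ∃ F : Set (Set (ℝ × ℝ)), F ⊆ avail ∧ IsTiling n F t

/-!
Tilings of the two children of a tile combine into a tiling of the tile, and a tiling of the tile
whose tiles each lie in one of the two children restricts to tilings of both. So it suffices that
a tiling of a tile `I × J` of order `k < n` by order-`n` tiles lies entirely in its horizontal or
entirely in its vertical children. Otherwise some tile lies in neither horizontal child, so it
spans the full height, `I' × J`, and some tile lies in neither vertical child, so it spans the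
full width, `I × J'`. These two cross, so their interiors meet and they coincide; but then
`I' × J = I × J` has order `k ≠ n`.
-/

def dyadicInterval (i a : ℕ) : Set ℝ := Icc ((a : ℝ) / 2 ^ i) (((a : ℝ) + 1) / 2 ^ i)

def Tileable (n : ℕ) (avail : Set (Set (ℝ × ℝ))) (R : Set (ℝ × ℝ)) : Prop :=
  ∃ F : Set (Set (ℝ × ℝ)), F ⊆ avail ∧ IsTiling n F R

lemma blocked_iff_not_tileable {n : ℕ} {avail : Set (Set (ℝ × ℝ))} {R : Set (ℝ × ℝ)} :
    Blocked n avail R ↔ ¬ Tileable n avail R :=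
  Iff.rfl

section DyadicInterval

lemma dyadicInterval_left_lt_right (i a : ℕ) : (a : ℝ) / 2 ^ i < ((a : ℝ) + 1) / 2 ^ i := by
  gcongr
  exact lt_add_one _

lemma interior_dyadicInterval (i a : ℕ) :
    interior (dyadicInterval i a) = Ioo ((a : ℝ) / 2 ^ i) (((a : ℝ) + 1) / 2 ^ i) :=
  interior_Icc

lemma interior_dyadicInterval_nonempty (i a : ℕ) : (interior (dyadicInterval i a)).Nonempty := by
  rw [interior_dyadicInterval]
  exact nonempty_Ioo.2 (dyadicInterval_left_lt_right i a)

lemma closure_interior_dyadicInterval (i a : ℕ) :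
    closure (interior (dyadicInterval i a)) = dyadicInterval i a := by
  rw [interior_dyadicInterval, closure_Ioo (dyadicInterval_left_lt_right i a).ne]
  rfl

lemma le_of_dyadicInterval_subset {i a i' a' : ℕ} (h : dyadicInterval i' a' ⊆ dyadicInterval i a) :
    i ≤ i' := by
  rw [dyadicInterval, dyadicInterval, Icc_subset_Icc_iff (dyadicInterval_left_lt_right i' a').le]
    at h
  have hlen : (1 : ℝ) / 2 ^ i' ≤ 1 / 2 ^ i := by
    calc (1 : ℝ) / 2 ^ i' = ((a' : ℝ) + 1) / 2 ^ i' - a' / 2 ^ i' := by ring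
      _ ≤ ((a : ℝ) + 1) / 2 ^ i - a / 2 ^ i := by linarith [h.1, h.2]
      _ = 1 / 2 ^ i := by ring
  rw [one_div_le_one_div (by positivity) (by positivity)] at hlen
  exact (pow_le_pow_iff_right₀ one_lt_two).1 hlen

lemma dyadicInterval_add_subset_iff {i d a a' : ℕ} :
    dyadicInterval (i + d) a' ⊆ dyadicInterval i a ↔ a' / 2 ^ d = a := by
  have hrefine (c : ℕ) : (c : ℝ) / 2 ^ i = ((c * 2 ^ d : ℕ) : ℝ) / 2 ^ (i + d) := by
    push_cast
    rw [pow_add]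
    field_simp
  have hrefine' : ((a : ℝ) + 1) / 2 ^ i = (((a + 1) * 2 ^ d : ℕ) : ℝ) / 2 ^ (i + d) := by
    exact_mod_cast hrefine (a + 1)
  rw [dyadicInterval, dyadicInterval, Icc_subset_Icc_iff (dyadicInterval_left_lt_right _ _).le,
    hrefine a, hrefine', div_le_div_iff_of_pos_right (by positivity), div_le_div_iff_of_pos_right (by positivity)]
  norm_cast
  have hpos : 0 < 2 ^ d := by positivity
  rw [Nat.div_eq_iff hpos, add_mul, one_mul]
  omega

lemma dyadicInterval_subset_children_or_eq {i a i' a' : ℕ}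
    (h : dyadicInterval i' a' ⊆ dyadicInterval i a) :
    (dyadicInterval i' a' ⊆ dyadicInterval (i + 1) (2 * a) ∨
      dyadicInterval i' a' ⊆ dyadicInterval (i + 1) (2 * a + 1)) ∨ (i' = i ∧ a' = a) := by
  obtain ⟨d, rfl⟩ := Nat.exists_eq_add_of_le (le_of_dyadicInterval_subset h)
  rw [dyadicInterval_add_subset_iff] at h
  rcases d with _ | d
  · simp only [pow_zero, Nat.div_one] at h
    exact Or.inr ⟨rfl, h⟩
  · rw [pow_succ, ← Nat.div_div_eq_div_mul] at h
    rw [add_comm d, ← add_assoc, dyadicInterval_add_subset_iff, dyadicInterval_add_subset_iff]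
    omega

lemma dyadicInterval_children_union (i a : ℕ) :
    dyadicInterval (i + 1) (2 * a) ∪ dyadicInterval (i + 1) (2 * a + 1) = dyadicInterval i a := by
  have hleft : ((2 * a : ℕ) : ℝ) / 2 ^ (i + 1) = a / 2 ^ i := by
    push_cast
    rw [pow_succ]
    field_simp
  have hright : ((2 * a + 1 : ℕ) + 1 : ℝ) / 2 ^ (i + 1) = (a + 1) / 2 ^ i := by
    push_cast
    rw [pow_succ]
    field_simp
    ring
  have hmid : ((2 * a : ℕ) : ℝ) + 1 = ((2 * a + 1 : ℕ) : ℝ) := by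
    push_cast
    ring
  rw [dyadicInterval, dyadicInterval, dyadicInterval, hmid,
    Icc_union_Icc_eq_Icc (hmid ▸ (dyadicInterval_left_lt_right (i + 1) (2 * a)).le)
      (dyadicInterval_left_lt_right _ _).le, hleft, hright]

lemma disjoint_interior_dyadicInterval_children (i a : ℕ) :
    Disjoint (interior (dyadicInterval (i + 1) (2 * a)))
      (interior (dyadicInterval (i + 1) (2 * a + 1))) := by
  rw [interior_dyadicInterval, interior_dyadicInterval, Set.disjoint_left]
  rintro x ⟨-, hx⟩ ⟨hx', -⟩
  push_cast at hx hx'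
  linarith

end DyadicInterval

section DyadicTile

lemma dyadicTile_eq_prod (i j a b : ℕ) :
    dyadicTile i j a b = dyadicInterval i a ×ˢ dyadicInterval j b :=
  rfl

lemma dyadicTile_subset_dyadicTile_iff {i j a b i' j' a' b' : ℕ} :
    dyadicTile i' j' a' b' ⊆ dyadicTile i j a b ↔
      dyadicInterval i' a' ⊆ dyadicInterval i a ∧ dyadicInterval j' b' ⊆ dyadicInterval j b :=
  prod_subset_prod_iff' (((interior_dyadicInterval_nonempty i' a').mono interior_subset).prod
    ((interior_dyadicInterval_nonempty j' b').mono interior_subset))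

lemma interior_dyadicTile (i j a b : ℕ) :
    interior (dyadicTile i j a b) = interior (dyadicInterval i a) ×ˢ interior (dyadicInterval j b) :=
  interior_prod_eq _ _

lemma closure_interior_dyadicTile (i j a b : ℕ) :
    closure (interior (dyadicTile i j a b)) = dyadicTile i j a b := by
  rw [interior_dyadicTile, closure_prod_eq, closure_interior_dyadicInterval,
    closure_interior_dyadicInterval]
  rfl

lemma IsDyadicTile.isClosed {n : ℕ} {t : Set (ℝ × ℝ)} (h : IsDyadicTile n t) : IsClosed t := by
  obtain ⟨i, j, a, b, -, -, -, rfl⟩ := h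
  exact isClosed_Icc.prod isClosed_Icc

lemma finite_setOf_isDyadicTile (n : ℕ) : {t | IsDyadicTile n t}.Finite := by
  refine ((((finite_Iic n).prod (finite_Iic n)).prod
    ((finite_Iio (2 ^ n)).prod (finite_Iio (2 ^ n)))).image
      fun q : (ℕ × ℕ) × ℕ × ℕ => dyadicTile q.1.1 q.1.2 q.2.1 q.2.2).subset ?_
  rintro t ⟨i, j, a, b, hij, ha, hb, rfl⟩
  refine ⟨((i, j), (a, b)), ⟨⟨?_, ?_⟩, ?_, ?_⟩, rfl⟩
  · exact Nat.le.intro hij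
  · exact Nat.le.intro ((add_comm j i).trans hij)
  · exact ha.trans_le (Nat.pow_le_pow_right two_pos (by omega))
  · exact hb.trans_le (Nat.pow_le_pow_right two_pos (by omega))

lemma dyadicTile_horizontal_children_union (i j a b : ℕ) :
    dyadicTile i (j + 1) a (2 * b) ∪ dyadicTile i (j + 1) a (2 * b + 1) = dyadicTile i j a b := by
  rw [dyadicTile_eq_prod, dyadicTile_eq_prod, ← prod_union, dyadicInterval_children_union]
  rfl

lemma dyadicTile_vertical_children_union (i j a b : ℕ) :
    dyadicTile (i + 1) j (2 * a) b ∪ dyadicTile (i + 1) j (2 * a + 1) b = dyadicTile i j a b := by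
  rw [dyadicTile_eq_prod, dyadicTile_eq_prod, ← union_prod, dyadicInterval_children_union]
  rfl

lemma disjoint_interior_horizontal_children (i j a b : ℕ) :
    Disjoint (interior (dyadicTile i (j + 1) a (2 * b)))
      (interior (dyadicTile i (j + 1) a (2 * b + 1))) := by
  rw [interior_dyadicTile, interior_dyadicTile, Set.disjoint_prod]
  exact Or.inr (disjoint_interior_dyadicInterval_children j b)

lemma disjoint_interior_vertical_children (i j a b : ℕ) :
    Disjoint (interior (dyadicTile (i + 1) j (2 * a) b))
      (interior (dyadicTile (i + 1) j (2 * a + 1) b)) := by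
  rw [interior_dyadicTile, interior_dyadicTile, Set.disjoint_prod]
  exact Or.inl (disjoint_interior_dyadicInterval_children i a)

lemma dyadicTile_subset_horizontal_children_or_eq {i j a b i' j' a' b' : ℕ}
    (h : dyadicTile i' j' a' b' ⊆ dyadicTile i j a b) :
    (dyadicTile i' j' a' b' ⊆ dyadicTile i (j + 1) a (2 * b) ∨
      dyadicTile i' j' a' b' ⊆ dyadicTile i (j + 1) a (2 * b + 1)) ∨ (j' = j ∧ b' = b) := by
  simp only [dyadicTile_subset_dyadicTile_iff] at h ⊢
  rcases dyadicInterval_subset_children_or_eq h.2 with hy | hy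
  · exact Or.inl (hy.imp (⟨h.1, ·⟩) (⟨h.1, ·⟩))
  · exact Or.inr hy

lemma dyadicTile_subset_vertical_children_or_eq {i j a b i' j' a' b' : ℕ}
    (h : dyadicTile i' j' a' b' ⊆ dyadicTile i j a b) :
    (dyadicTile i' j' a' b' ⊆ dyadicTile (i + 1) j (2 * a) b ∨
      dyadicTile i' j' a' b' ⊆ dyadicTile (i + 1) j (2 * a + 1) b) ∨ (i' = i ∧ a' = a) := by
  simp only [dyadicTile_subset_dyadicTile_iff] at h ⊢
  rcases dyadicInterval_subset_children_or_eq h.1 with hx | hx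
  · exact Or.inl (hx.imp (⟨·, h.2⟩) (⟨·, h.2⟩))
  · exact Or.inr hx

end DyadicTile

section Tiling

variable {n : ℕ} {F F₁ F₂ : Set (Set (ℝ × ℝ))} {R R₁ R₂ : Set (ℝ × ℝ)}

lemma IsTiling.finite (hF : IsTiling n F R) : F.Finite :=
  (finite_setOf_isDyadicTile n).subset hF.1

lemma IsTiling.subset {T : Set (ℝ × ℝ)} (hF : IsTiling n F R) (hT : T ∈ F) : T ⊆ R :=
  hF.2.1 ▸ subset_sUnion_of_mem hT

lemma IsTiling.union (h₁ : IsTiling n F₁ R₁) (h₂ : IsTiling n F₂ R₂)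
    (hd : Disjoint (interior R₁) (interior R₂)) : IsTiling n (F₁ ∪ F₂) (R₁ ∪ R₂) := by
  refine ⟨fun t ht => ht.elim (h₁.1 t) (h₂.1 t), by rw [sUnion_union, h₁.2.1, h₂.2.1], ?_⟩
  refine pairwise_union.2 ⟨h₁.2.2, h₂.2.2, fun s hs t ht _ => ?_⟩
  have hst : Disjoint (interior s) (interior t) :=
    hd.mono (interior_mono (h₁.subset hs)) (interior_mono (h₂.subset ht))
  exact ⟨disjoint_iff_inter_eq_empty.1 hst, disjoint_iff_inter_eq_empty.1 hst.symm⟩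

lemma IsTiling.restrict {C₁ C₂ : Set (ℝ × ℝ)} (hF : IsTiling n F (C₁ ∪ C₂))
    (hsplit : ∀ T ∈ F, T ⊆ C₁ ∨ T ⊆ C₂) (hC₁ : C₁ ⊆ closure (interior C₁))
    (hd : Disjoint (interior C₁) C₂) : IsTiling n {T ∈ F | T ⊆ C₁} C₁ := by
  refine ⟨fun t ht => hF.1 t ht.1, ?_, hF.2.2.mono fun t ht => ht.1⟩
  refine (sUnion_subset fun t ht => ht.2).antisymm ?_
  have hclosed : IsClosed (⋃₀ {T ∈ F | T ⊆ C₁}) := by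
    rw [sUnion_eq_biUnion]
    exact (hF.finite.subset fun t ht => ht.1).isClosed_biUnion fun t ht => (hF.1 t ht.1).isClosed
  have hcover : interior C₁ ⊆ ⋃₀ {T ∈ F | T ⊆ C₁} := by
    intro p hp
    obtain ⟨T, hT, hpT⟩ : p ∈ ⋃₀ F := hF.2.1 ▸ Or.inl (interior_subset hp)
    exact ⟨T, ⟨hT, (hsplit T hT).resolve_right fun hT₂ => hd.ne_of_mem hp (hT₂ hpT) rfl⟩, hpT⟩
  exact hC₁.trans (hclosed.closure_subset_iff.2 hcover)

variable {avail : Set (Set (ℝ × ℝ))} {C₁ C₂ : Set (ℝ × ℝ)}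

lemma Tileable.union (h₁ : Tileable n avail C₁) (h₂ : Tileable n avail C₂)
    (hd : Disjoint (interior C₁) (interior C₂)) : Tileable n avail (C₁ ∪ C₂) := by
  obtain ⟨F₁, hF₁a, hF₁⟩ := h₁
  obtain ⟨F₂, hF₂a, hF₂⟩ := h₂
  exact ⟨F₁ ∪ F₂, union_subset hF₁a hF₂a, hF₁.union hF₂ hd⟩

lemma IsTiling.tileable_and_tileable (hF : IsTiling n F (C₁ ∪ C₂)) (hFa : F ⊆ avail)
    (hsplit : ∀ T ∈ F, T ⊆ C₁ ∨ T ⊆ C₂) (hC₁ : closure (interior C₁) = C₁)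
    (hC₂ : closure (interior C₂) = C₂) (hd : Disjoint (interior C₁) (interior C₂)) :
    Tileable n avail C₁ ∧ Tileable n avail C₂ := by
  have hd₁ : Disjoint (interior C₁) C₂ := hC₂ ▸ hd.closure_right isOpen_interior
  have hd₂ : Disjoint (interior C₂) C₁ := hC₁ ▸ hd.symm.closure_right isOpen_interior
  refine ⟨⟨_, (sep_subset _ _).trans hFa, hF.restrict hsplit hC₁.ge hd₁⟩,
    ⟨{T ∈ F | T ⊆ C₂}, (sep_subset _ _).trans hFa, ?_⟩⟩
  rw [union_comm] at hF
  exact hF.restrict (fun T hT => (hsplit T hT).symm) hC₂.ge hd₂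

end Tiling

lemma IsTiling.forall_subset_horizontal_or_vertical_children {n i j a b : ℕ}
    {F : Set (Set (ℝ × ℝ))} (hF : IsTiling n F (dyadicTile i j a b)) (hk : i + j < n) :
    (∀ T ∈ F, T ⊆ dyadicTile i (j + 1) a (2 * b) ∨ T ⊆ dyadicTile i (j + 1) a (2 * b + 1)) ∨
      (∀ T ∈ F, T ⊆ dyadicTile (i + 1) j (2 * a) b ∨ T ⊆ dyadicTile (i + 1) j (2 * a + 1) b) := by
  by_contra! h
  obtain ⟨⟨T₁, hT₁, hT₁H⟩, ⟨T₂, hT₂, hT₂V⟩⟩ := h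
  obtain ⟨i₁, j₁, a₁, b₁, -, -, -, rfl⟩ := hF.1 T₁ hT₁
  obtain ⟨i₂, j₂, a₂, b₂, hn₂, -, -, rfl⟩ := hF.1 T₂ hT₂
  obtain ⟨hj₁, hb₁⟩ :=
    (dyadicTile_subset_horizontal_children_or_eq (hF.subset hT₁)).resolve_left (not_or.2 hT₁H)
  obtain ⟨hi₂, ha₂⟩ :=
    (dyadicTile_subset_vertical_children_or_eq (hF.subset hT₂)).resolve_left (not_or.2 hT₂V)
  subst j₁ b₁ i₂ a₂
  obtain ⟨hx₁, -⟩ := dyadicTile_subset_dyadicTile_iff.1 (hF.subset hT₁)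
  obtain ⟨-, hy₂⟩ := dyadicTile_subset_dyadicTile_iff.1 (hF.subset hT₂)
  obtain ⟨x, hx⟩ := interior_dyadicInterval_nonempty i₁ a₁
  obtain ⟨y, hy⟩ := interior_dyadicInterval_nonempty j₂ b₂
  have hmeet : (x, y) ∈ interior (dyadicTile i₁ j a₁ b) ∩ interior (dyadicTile i j₂ a b₂) := by
    rw [interior_dyadicTile, interior_dyadicTile]
    exact ⟨⟨hx, interior_mono hy₂ hy⟩, interior_mono hx₁ hx, hy⟩
  have heq : dyadicTile i₁ j a₁ b = dyadicTile i j₂ a b₂ := by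
    by_contra hne
    rwa [hF.2.2 hT₁ hT₂ hne] at hmeet
  have := le_of_dyadicInterval_subset (dyadicTile_subset_dyadicTile_iff.1 heq.le).2
  omega

theorem tileable_iff_children {n i j a b : ℕ} {avail : Set (Set (ℝ × ℝ))} (hk : i + j < n) :
    Tileable n avail (dyadicTile i j a b) ↔
      (Tileable n avail (dyadicTile i (j + 1) a (2 * b)) ∧
          Tileable n avail (dyadicTile i (j + 1) a (2 * b + 1))) ∨
        (Tileable n avail (dyadicTile (i + 1) j (2 * a) b) ∧
          Tileable n avail (dyadicTile (i + 1) j (2 * a + 1) b)) := by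
  constructor
  · rintro ⟨F, hFa, hF⟩
    rcases hF.forall_subset_horizontal_or_vertical_children hk with hH | hV
    · rw [← dyadicTile_horizontal_children_union] at hF
      exact Or.inl (hF.tileable_and_tileable hFa hH (closure_interior_dyadicTile ..)
        (closure_interior_dyadicTile ..) (disjoint_interior_horizontal_children ..))
    · rw [← dyadicTile_vertical_children_union] at hF
      exact Or.inr (hF.tileable_and_tileable hFa hV (closure_interior_dyadicTile ..)
        (closure_interior_dyadicTile ..) (disjoint_interior_vertical_children ..))
  · rintro (⟨h₁, h₂⟩ | ⟨h₁, h₂⟩)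
    · rw [← dyadicTile_horizontal_children_union]
      exact h₁.union h₂ (disjoint_interior_horizontal_children ..)
    · rw [← dyadicTile_vertical_children_union]
      exact h₁.union h₂ (disjoint_interior_vertical_children ..)

theorem blocked_iff_children_general (n k : ℕ) (hk : k < n) (avail : Set (Set (ℝ × ℝ)))
    (i j a b : ℕ) (hij : i + j = k) :
    Blocked n avail (dyadicTile i j a b) ↔
      (Blocked n avail (dyadicTile i (j + 1) a (2 * b)) ∨
        Blocked n avail (dyadicTile i (j + 1) a (2 * b + 1))) ∧
      (Blocked n avail (dyadicTile (i + 1) j (2 * a) b) ∨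
        Blocked n avail (dyadicTile (i + 1) j (2 * a + 1) b)) := by
  simp only [blocked_iff_not_tileable, tileable_iff_children (hij ▸ hk : i + j < n)]
  tauto

/-- a tile of order `k < n` is blocked iff at least one of its two
horizontal children and at least one of its two vertical children is blocked. -/
theorem blocked_iff_children (n k : ℕ) (hk : k < n) (avail : Set (Set (ℝ × ℝ)))
    (havail : ∀ t ∈ avail, IsDyadicTile n t)
    (i j a b : ℕ) (hij : i + j = k) (ha : a < 2 ^ i) (hb : b < 2 ^ j) :
    Blocked n avail (dyadicTile i j a b) ↔
      (Blocked n avail (dyadicTile i (j + 1) a (2 * b)) ∨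
        Blocked n avail (dyadicTile i (j + 1) a (2 * b + 1))) ∧
      (Blocked n avail (dyadicTile (i + 1) j (2 * a) b) ∨
        Blocked n avail (dyadicTile (i + 1) j (2 * a + 1) b)) :=
  blocked_iff_children_general n k hk avail i j a b hij

end
end
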